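/- arXiv:2304.11723 — 4 statements merged into one kernel-verified Lean document; each statement's English description precedes it below -/
import Mathlib

section
/- Sufficiency of the efficient frontier: if R*_p ⊆ R_p is the set of paths r not dominated by any other path r̂ ∈ R_p in the sense that (τ_{r2} ≥ τ_{r̂2}, c_r ≥ c_{r̂}, and τ_{r1} − c_r ≤ τ_{r̂1} − c_{r̂}, with at least one strict), then for all times t1, t2, min{c_r : r ∈ R*_p, t1 ≥ τ_{r2}, t2 ≤ −c_r + min(t1, τ_{r1})} = min{c_r : r ∈ R_p, t1 ≥ τ_{r2}, t2 ≤ −c_r + min(t1, τ_{r1})}. -/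
/- Sufficiency of the efficient frontier: restricting the minimization defining
`c_{p,t1,t2}` to the non-dominated paths `R*_p` does not change its value. -/
open Classical in
theorem efficient_frontier_sufficient {ι : Type*} (R : Finset ι)
    (c τ1 τ2 : ι → ℝ) (t1 t2 : ℝ) :
    (((R.filter fun r => ¬ ∃ rh ∈ R,
          (τ2 rh ≤ τ2 r ∧ c rh ≤ c r ∧ τ1 r - c r ≤ τ1 rh - c rh) ∧
          (τ2 rh < τ2 r ∨ c rh < c r ∨ τ1 r - c r < τ1 rh - c rh)).filter
        fun r => τ2 r ≤ t1 ∧ t2 ≤ -(c r) + min t1 (τ1 r)).inf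
          fun r => ((c r : ℝ) : EReal)) =
    ((R.filter fun r => τ2 r ≤ t1 ∧ t2 ≤ -(c r) + min t1 (τ1 r)).inf
          fun r => ((c r : ℝ) : EReal)) := by
  classical
  apply le_antisymm
  · -- LHS ≤ RHS : for every feasible r there is a non-dominated feasible m with c m ≤ c r
    apply Finset.le_inf
    intro r hr
    simp only [Finset.mem_filter] at hr
    obtain ⟨hrR, hrt1, hrt2⟩ := hr
    -- map into ℝ³ with the product order
    set g : ι → ℝ × ℝ × ℝ := fun x => (τ2 x, c x, c x - τ1 x) with hg
    set S : Finset ι := R.filter (fun x => g x ≤ g r) with hS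
    have hrS : r ∈ S := by simp [hS, hrR]
    obtain ⟨v, hvS, hvmin⟩ := (S.image g).exists_minimal ⟨g r, Finset.mem_image_of_mem g hrS⟩
    obtain ⟨m, hmS, hgm⟩ := Finset.mem_image.mp hvS
    have hmR : m ∈ R := (Finset.mem_filter.mp hmS).1
    have hmr : g m ≤ g r := (Finset.mem_filter.mp hmS).2
    obtain ⟨h1, h2, h3⟩ : τ2 m ≤ τ2 r ∧ c m ≤ c r ∧ c m - τ1 m ≤ c r - τ1 r := by
      simpa [hg, Prod.le_def] using hmr
    -- m is feasible
    have hmt1 : τ2 m ≤ t1 := h1.trans hrt1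
    have hmt2 : t2 ≤ -(c m) + min t1 (τ1 m) := by
      have h3' : τ1 r - c r ≤ τ1 m - c m := by linarith
      rcases le_total t1 (τ1 r) with h | h <;> rcases le_total t1 (τ1 m) with h' | h' <;>
        simp_all [min_eq_left, min_eq_right] <;> linarith
    -- m is non-dominated
    have hmnd : ¬ ∃ rh ∈ R,
        (τ2 rh ≤ τ2 m ∧ c rh ≤ c m ∧ τ1 m - c m ≤ τ1 rh - c rh) ∧
        (τ2 rh < τ2 m ∨ c rh < c m ∨ τ1 m - c m < τ1 rh - c rh) := by
      rintro ⟨rh, hrhR, ⟨d1, d2, d3⟩, hstrict⟩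
      have hle : g rh ≤ g m := by
        simp only [hg, Prod.le_def]
        exact ⟨d1, d2, by linarith⟩
      have hlt : g rh < g m := by
        refine lt_of_le_of_ne hle ?_
        intro heq
        simp only [hg, Prod.mk.injEq] at heq
        obtain ⟨e1, e2, e3⟩ := heq
        rcases hstrict with h | h | h <;> linarith
      have hrhS : rh ∈ S := Finset.mem_filter.mpr ⟨hrhR, hle.trans hmr⟩
      have hv := hvmin (Finset.mem_image_of_mem g hrhS) (hgm ▸ hlt.le)
      rw [← hgm] at hv
      exact absurd hv (not_le_of_gt hlt)
    -- conclude
    have hmem : m ∈ ((R.filter fun r => ¬ ∃ rh ∈ R,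
          (τ2 rh ≤ τ2 r ∧ c rh ≤ c r ∧ τ1 r - c r ≤ τ1 rh - c rh) ∧
          (τ2 rh < τ2 r ∨ c rh < c r ∨ τ1 r - c r < τ1 rh - c rh)).filter
        fun r => τ2 r ≤ t1 ∧ t2 ≤ -(c r) + min t1 (τ1 r)) := by
      refine Finset.mem_filter.mpr ⟨Finset.mem_filter.mpr ⟨hmR, ?_⟩, hmt1, hmt2⟩
      convert hmnd using 0
    exact le_trans (Finset.inf_le hmem) (by exact_mod_cast h2)
  · -- RHS ≤ LHS : subset
    apply Finset.inf_mono
    intro x hx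
    simp only [Finset.mem_filter] at hx ⊢
    exact ⟨hx.1.1, hx.2⟩
end

section
/- Prepending preserves dominance: if r̂⁻ dominates r⁻ (i.e., τ_{r̂⁻2} ≤ τ_{r⁻2}, c_{r̂⁻} ≤ c_{r⁻}, τ_{r̂⁻1} − c_{r̂⁻} ≥ τ_{r⁻1} − c_{r⁻}), r⁻ and r̂⁻ have the same first customer w = ŵ, and r, r̂ are obtained by prepending the same customer u, so that c_r = c_{r⁻} + t_{uw} and c_{r̂} = c_{r̂⁻} + t_{uw}, then r̂ dominates r, where τ_{r1} = min(t⁺_u, τ_{r⁻1} + t_{uw}), τ_{r2} = max(t⁻_u, τ_{r⁻2} + t_{uw}) and similarly for r̂. -/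
/-- Prepending preserves dominance: if `r̂⁻` weakly dominates `r⁻` and both paths get
the same first customer `u` prepended (same second customer, so the same travel
time `t_{uw} ≥ 0` is added, updating `c ← c + t_{uw}`, `τ1 ← min(t⁺_u, τ1 + t_{uw})`,
`τ2 ← max(t⁻_u, τ2 + t_{uw})`), then `r̂` weakly dominates `r`. -/
theorem prepend_preserves_dominance (cm cm' τ1m τ1m' τ2m τ2m' tuw tPu tMu : ℝ)
    (htuw : 0 ≤ tuw)
    (h1 : τ2m' ≤ τ2m) (h2 : cm' ≤ cm) (h3 : τ1m - cm ≤ τ1m' - cm') :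
    max tMu (τ2m' + tuw) ≤ max tMu (τ2m + tuw) ∧
    cm' + tuw ≤ cm + tuw ∧
    min tPu (τ1m + tuw) - (cm + tuw) ≤ min tPu (τ1m' + tuw) - (cm' + tuw) := by
  refine ⟨max_le_max le_rfl (by linarith), by linarith, ?_⟩
  rcases min_cases tPu (τ1m + tuw) with ⟨e1, _⟩ | ⟨e1, _⟩ <;>
    rcases min_cases tPu (τ1m' + tuw) with ⟨e2, _⟩ | ⟨e2, _⟩ <;>
    rw [e1, e2] <;> linarith
end

section
/- Termination characterization of node splitting for capacity (Case 2 sufficient condition): consider a path through nodes g_1,…,g_m in the relaxed graph, where node g_k carries a demand interval [d⁻_{g_k}, d⁺_{g_k}], and let d_{0:k} = d_0 − Σ_{i ≤ q_k} d_{u_i} be the true capacity remaining before reaching g_k. If d⁺_{g_k} = d_{0:k} for all 1 ≤ k < m, then the total demand serviced along the path does not exceed d_0. -/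
/-- Case 2 sufficient condition: if every intermediate relaxed-graph node `k`
(`1 ≤ k < K`) has `d⁺_{g_k}` equal to the true remaining capacity
`d_{0:k} = d_0 − Σ_{i<k} δ_i`, and edges satisfy `d⁻_{g_{k+1}} ≤ d⁺_{g_k} − δ_k`
with `d⁻ ≥ 0`, then the total demand serviced does not exceed `d_0`. -/
theorem capacity_split_sufficient (K : ℕ) (hK : 1 ≤ K) (d0 : ℝ)
    (δ dplus dminus : ℕ → ℝ)
    (hδ : ∀ i, 0 ≤ δ i) (h0 : dplus 0 = d0) (hminus : ∀ k, 0 ≤ dminus k)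
    (hedge : ∀ k < K, dminus (k + 1) ≤ dplus k - δ k)
    (hmid : ∀ k, 1 ≤ k → k < K → dplus k = d0 - ∑ i ∈ Finset.range k, δ i) :
    ∑ i ∈ Finset.range K, δ i ≤ d0 := by
  obtain ⟨k, rfl⟩ : ∃ k, K = k + 1 := ⟨K - 1, (Nat.succ_pred_eq_of_pos hK).symm⟩
  have he := hedge k (Nat.lt_succ_self k)
  have hm := hminus (k + 1)
  rcases Nat.eq_zero_or_pos k with rfl | hk
  · rw [Finset.sum_range_one]
    rw [h0] at he; linarith
  · have := hmid k hk (Nat.lt_succ_self k)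
    rw [this] at he
    rw [Finset.sum_range_succ]
    linarith
end

section
/- Elementarity of paths in a family multi-graph: let β be a strict total order on customers with the depot-source minimal and depot-sink maximal, and let edges be LA-arcs p = (u_p, v_p, N_p) required to satisfy β(u_p) < β(w) < β(v_p) for all w ∈ N_p. Then along any source-to-sink path of concatenated arcs (where the end customer of each arc is the start of the next), the set of customers serviced (the sets {u_p} ∪ N_p over arcs p of the path) are pairwise disjoint; i.e., every such path is an elementary route. -/
/-- An LA-arc: start customer, end customer, and set of intermediate customers. -/
structure LAArc (α : Type*) where
  u : α
  v : α
  Np : Finset α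

/-- Elementarity of paths in a family multi-graph: if every arc is β-consistent
(`β u_p < β w < β v_p` for intermediate `w`, and `β u_p < β v_p`) and consecutive
arcs are chained (`v_{p_k} = u_{p_{k+1}}`), starting at the source depot and ending
at the sink depot, then the serviced customer sets `{u_p} ∪ N_p` of the arcs are
pairwise disjoint: every such path is an elementary route. -/
theorem family_paths_elementary {α : Type*} [DecidableEq α]
    (β : α → ℕ) (hβ : Function.Injective β) (src snk : α)
    (K : ℕ) (hK : 0 < K) (p : Fin K → LAArc α)
    (hcons : ∀ k, β (p k).u < β (p k).v ∧
      ∀ w ∈ (p k).Np, β (p k).u < β w ∧ β w < β (p k).v)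
    (hchain : ∀ k : Fin K, ∀ h : k.val + 1 < K, (p k).v = (p ⟨k.val + 1, h⟩).u)
    (hsrc : (p ⟨0, hK⟩).u = src) (hsnk : (p ⟨K - 1, by omega⟩).v = snk) :
    ∀ k k' : Fin K, k ≠ k' →
      Disjoint (insert (p k).u (p k).Np) (insert (p k').u (p k').Np) := by
  -- key: for i < j, β (p i).v ≤ β (p j).u
  have key : ∀ n, ∀ i j : Fin K, j.val = n → i.val < j.val → β (p i).v ≤ β (p j).u := by
    intro n
    induction n with
    | zero => intro i j hj hij; omega
    | succ m ih =>
      intro i j hj hij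
      have hm : m < K := by omega
      have hmm : m + 1 < K := hj ▸ j.isLt
      have hj' : j = ⟨m + 1, hmm⟩ := Fin.ext hj
      have hchain' : (p ⟨m, hm⟩).v = (p j).u := by
        rw [hj']; exact hchain ⟨m, hm⟩ hmm
      rcases Nat.lt_or_ge i.val m with hlt | hge
      · have h1 := ih i ⟨m, hm⟩ rfl hlt
        have h2 := (hcons ⟨m, hm⟩).1
        rw [hchain'] at h2
        omega
      · have : i.val = m := by omega
        have hi : i = ⟨m, hm⟩ := Fin.ext this
        rw [hi, hchain']
  have key' : ∀ i j : Fin K, i.val < j.val → β (p i).v ≤ β (p j).u :=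
    fun i j h => key j.val i j rfl h
  -- elements of arc k's set have β in [β u_k, β v_k)
  have hmem : ∀ k : Fin K, ∀ x ∈ insert (p k).u (p k).Np,
      β (p k).u ≤ β x ∧ β x < β (p k).v := by
    intro k x hx
    rcases Finset.mem_insert.mp hx with h | h
    · subst h; exact ⟨le_refl _, (hcons k).1⟩
    · exact ⟨le_of_lt ((hcons k).2 x h).1, ((hcons k).2 x h).2⟩
  have main : ∀ k k' : Fin K, k.val < k'.val →
      Disjoint (insert (p k).u (p k).Np) (insert (p k').u (p k').Np) := by
    intro k k' hlt
    rw [Finset.disjoint_left]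
    intro x hx hx'
    have h1 := hmem k x hx
    have h2 := hmem k' x hx'
    have h3 := key' k k' hlt
    omega
  intro k k' hne
  rcases Nat.lt_or_ge k.val k'.val with h | h
  · exact main k k' h
  · have h' : k'.val < k.val := by
      rcases Nat.lt_or_ge k'.val k.val with h2 | h2
      · exact h2
      · exact absurd (Fin.ext (by omega)) hne
    exact (main k' k h').symm
end
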